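/- The image S := φ(Δ̃₁) is exactly the set {(x,y) ∈ ℝ² : 1/3 ≤ y ≤ 3/8 and f₁(y) ≤ x ≤ f₂(y)} ∪ {(x,y) ∈ ℝ² : 3/8 ≤ y ≤ 1/2 and f₁(y) ≤ x ≤ 0}, where f₁(y) := −(2(6y−2)^{3/2} − 3(6y−2) + 1)/27 and f₂(y) := −(−2(6y−2)^{3/2} − 3(6y−2) + 1)/27. In particular, the intersection of S with any horizontal or vertical line is either empty or a closed interval. -/

import Mathlib

/-- The triangle `Δ̃₁ ⊂ ℝ²`. -/
def DeltaTilde1 : Set (ℝ × ℝ) :=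
  {p | 0 ≤ p.1 ∧ Real.sqrt 3 / 3 * p.1 ≤ p.2 ∧
    p.2 ≤ -(Real.sqrt 3) * p.1 + Real.sqrt 3 / 3}

/-- The map `φ(c,d) = (α,ω)`. -/
noncomputable def phi (p : ℝ × ℝ) : ℝ × ℝ :=
  ((2 * Real.sqrt 3 * p.2 + 1) * (9 * p.1 ^ 2 - (Real.sqrt 3 * p.2 - 1) ^ 2) / 27,
   (3 * p.1 ^ 2 + 3 * p.2 ^ 2 + 2) / 6)

/-- The lower boundary curve. -/
noncomputable def f₁ (y : ℝ) : ℝ :=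
  -(2 * (6 * y - 2) ^ ((3 : ℝ) / 2) - 3 * (6 * y - 2) + 1) / 27

/-- The upper boundary curve. -/
noncomputable def f₂ (y : ℝ) : ℝ :=
  -(-2 * (6 * y - 2) ^ ((3 : ℝ) / 2) - 3 * (6 * y - 2) + 1) / 27

noncomputable def F₁ (y : ℝ) : ℝ := (-2*(Real.sqrt (6*y-2))^3 + 3*(6*y-2) - 1)/27
noncomputable def F₂ (y : ℝ) : ℝ := (2*(Real.sqrt (6*y-2))^3 + 3*(6*y-2) - 1)/27

lemma rpow32 (t : ℝ) (ht : 0 ≤ t) : t ^ ((3:ℝ)/2) = Real.sqrt t ^ 3 := by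
  have h := Real.rpow_natCast (t ^ ((1:ℝ)/2)) 3
  norm_num at h
  rw [show ((3:ℝ)/2) = (1/2)*3 by ring, Real.rpow_mul ht, Real.rpow_ofNat, ← Real.sqrt_eq_rpow]

lemma f1_eq {y : ℝ} (hy : 1/3 ≤ y) : f₁ y = F₁ y := by
  unfold f₁ F₁; rw [rpow32 _ (by linarith)]; ring

lemma f2_eq {y : ℝ} (hy : 1/3 ≤ y) : f₂ y = F₂ y := by
  unfold f₂ F₂; rw [rpow32 _ (by linarith)]; ring

lemma f2_38 : f₂ (3/8) = 0 := by
  rw [f2_eq (by norm_num)]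
  unfold F₂
  rw [show (6*(3/8:ℝ)-2) = 1/4 by norm_num,
    show (1/4:ℝ) = (1/2)^2 by norm_num, Real.sqrt_sq (by norm_num)]
  norm_num

set_option maxHeartbeats 1000000 in
lemma forward {c d : ℝ} (h : (c,d) ∈ DeltaTilde1) :
    phi (c,d) ∈ ({p : ℝ × ℝ | 1 / 3 ≤ p.2 ∧ p.2 ≤ 3 / 8 ∧ f₁ p.2 ≤ p.1 ∧ p.1 ≤ f₂ p.2} ∪
      {p : ℝ × ℝ | 3 / 8 ≤ p.2 ∧ p.2 ≤ 1 / 2 ∧ f₁ p.2 ≤ p.1 ∧ p.1 ≤ 0}) := by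
  have hc : 0 ≤ c := h.1
  set s := Real.sqrt 3 with hsdef
  have hs : s^2 = 3 := Real.sq_sqrt (by norm_num)
  have hs0 : 0 < s := Real.sqrt_pos.2 (by norm_num)
  have h2 : s/3*c ≤ d := h.2.1
  have h3 : d ≤ -s*c + s/3 := h.2.2
  have hd0 : 0 ≤ d := le_trans (by positivity) h2
  set m := s*d with hm
  have hm0 : 0 ≤ m := mul_nonneg hs0.le hd0
  have hm2 : m^2 = 3*d^2 := by rw [hm]; linear_combination d^2 * hs
  have hcm : c ≤ m := by
    have h4 := mul_le_mul_of_nonneg_left h2 hs0.le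
    have e : s*(s/3*c) = c := by linear_combination (c/3)*hs
    rw [hm]; linarith
  have h31 : m + 3*c ≤ 1 := by
    have h4 := mul_le_mul_of_nonneg_left h3 hs0.le
    have e : s*(-s*c+s/3) = -3*c+1 := by linear_combination (1/3 - c)*hs
    rw [hm]; linarith
  set t := 3*c^2+3*d^2 with htdef
  have ht0 : 0 ≤ t := by positivity
  have ht1 : t ≤ 1 := by nlinarith [mul_nonneg hm0 hc, sq_nonneg c]
  set u := Real.sqrt t with hu
  have hu0 : 0 ≤ u := Real.sqrt_nonneg t
  have hu2 : u^2 = t := Real.sq_sqrt ht0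
  have hmu : m ≤ u := by
    have e : m = Real.sqrt (m^2) := (Real.sqrt_sq hm0).symm
    rw [e, hu]
    apply Real.sqrt_le_sqrt
    nlinarith [sq_nonneg c]
  have hY : (phi (c,d)).2 = (t+2)/6 := by
    show (3*c^2+3*d^2+2)/6 = (t+2)/6
    rw [htdef]
  have hX : 27*(phi (c,d)).1 = -8*m^3+6*t*m+3*t-1 := by
    show 27*((2*s*d+1)*(9*c^2-(s*d-1)^2)/27) = -8*m^3+6*t*m+3*t-1
    rw [hm, htdef]
    linear_combination (6*s*d^3+3*d^2) * hs
  have harg : 6*((t+2)/6)-2 = t := by ring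
  have hY13 : 1/3 ≤ (t+2)/6 := by linarith
  have hf1 : f₁ ((t+2)/6) ≤ (phi (c,d)).1 := by
    rw [f1_eq hY13]
    unfold F₁
    rw [harg, ← hu]
    nlinarith [mul_nonneg (sub_nonneg.2 hmu) (sq_nonneg (2*m+u)), hu2, hm0]
  have hf2 : (phi (c,d)).1 ≤ f₂ ((t+2)/6) := by
    rw [f2_eq hY13]
    unfold F₂
    rw [harg, ← hu]
    nlinarith [mul_nonneg (sq_nonneg (2*m-u)) (add_nonneg hm0 hu0), hu2, hm0]
  by_cases h38 : (t+2)/6 ≤ 3/8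
  · left
    exact ⟨by rw [hY]; exact hY13, by rw [hY]; exact h38, by rw [hY]; exact hf1, by rw [hY]; exact hf2⟩
  · right
    have h9 : (3*c)^2 ≤ (1-m)^2 :=
      pow_le_pow_left₀ (by positivity) (by linarith) 2
    have hq : 3*t ≤ 4*m^2-2*m+1 := by nlinarith [h9, hm2]
    have key : (2*m+1)*(4*m^2-2*m+1-3*t) = -(-8*m^3+6*t*m+3*t-1) := by ring
    have hX0 : (phi (c,d)).1 ≤ 0 := by
      have hprod := mul_nonneg (by linarith : (0:ℝ) ≤ 2*m+1) (by linarith : (0:ℝ) ≤ 4*m^2-2*m+1-3*t)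
      linarith [hX, key, hprod]
    exact ⟨by rw [hY]; linarith, by rw [hY]; linarith, by rw [hY]; exact hf1, hX0⟩

set_option maxHeartbeats 1000000 in
lemma construct {X Y t u m : ℝ} (htY : t = 6*Y-2) (hudef : u = Real.sqrt t) (ht0 : 0 ≤ t)
    (hm_lb : u/2 ≤ m) (hm_ub : m ≤ u) (hm1 : 3*t ≤ 4*m^2-2*m+1) (hmle1 : m ≤ 1)
    (hGm : (-8*m^3+6*t*m+3*t-1)/27 = X) : (X,Y) ∈ phi '' DeltaTilde1 := by
  set s := Real.sqrt 3 with hsdef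
  have hs : s^2 = 3 := Real.sq_sqrt (by norm_num)
  have hs0 : 0 < s := Real.sqrt_pos.2 (by norm_num)
  have hu0 : 0 ≤ u := hudef ▸ Real.sqrt_nonneg t
  have hu2 : u^2 = t := hudef ▸ Real.sq_sqrt ht0
  have hm0 : 0 ≤ m := by linarith
  have hmsq : m^2 ≤ t := by nlinarith
  obtain ⟨c, hcdef⟩ : ∃ c, c = Real.sqrt ((t-m^2)/3) := ⟨_, rfl⟩
  obtain ⟨d, hddef⟩ : ∃ d, d = m/s := ⟨_, rfl⟩
  have hc0 : 0 ≤ c := hcdef ▸ Real.sqrt_nonneg _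
  have hc2 : c^2 = (t-m^2)/3 := hcdef ▸ Real.sq_sqrt (by linarith)
  have hsd : s*d = m := by rw [hddef]; field_simp
  have hd2 : 3*d^2 = m^2 := by
    rw [hddef]; rw [div_pow]; rw [hs]; ring
  have hcm : c ≤ m := by
    have h5 : c^2 ≤ m^2 := by nlinarith
    calc c = Real.sqrt (c^2) := (Real.sqrt_sq hc0).symm
    _ ≤ Real.sqrt (m^2) := Real.sqrt_le_sqrt (by linarith)
    _ = m := Real.sqrt_sq hm0
  have h3c : 3*c ≤ 1-m := by
    have h5 : (3*c)^2 ≤ (1-m)^2 := by nlinarith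
    nlinarith [sq_nonneg (3*c-(1-m)), sq_nonneg (3*c+(1-m))]
  refine ⟨(c,d), ⟨hc0, ?_, ?_⟩, ?_⟩
  · show s/3*c ≤ d
    have e : s/3*m = d := by rw [hddef]; field_simp; linear_combination m*hs
    have := mul_le_mul_of_nonneg_left hcm (by positivity : (0:ℝ) ≤ s/3)
    linarith
  · show d ≤ -s*c + s/3
    rw [hddef, div_le_iff₀ hs0]
    have e : (-s*c+s/3)*s = -3*c+1 := by linear_combination (1/3 - c)*hs
    linarith
  · have h1 : (phi (c,d)).1 = X := by
      show (2*s*d+1)*(9*c^2-(s*d-1)^2)/27 = X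
      linear_combination hGm + (2*m+1)/3 * hc2 + ((-2*((s*d)^2+s*d*m+m^2)+3*(s*d+m)+18*c^2)/27) * hsd
    have h2 : (phi (c,d)).2 = Y := by
      show (3*c^2+3*d^2+2)/6 = Y
      linear_combination (1/2)*hc2 + (1/6)*hd2 + (1/6)*htY
    exact Prod.ext h1 h2

set_option maxHeartbeats 1000000 in
lemma revA {X Y : ℝ} (h1 : 1/3 ≤ Y) (h2 : Y ≤ 3/8) (h3 : f₁ Y ≤ X) (h4 : X ≤ f₂ Y) :
    (X,Y) ∈ phi '' DeltaTilde1 := by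
  obtain ⟨t, htdef⟩ : ∃ t, t = 6*Y-2 := ⟨_, rfl⟩
  obtain ⟨u, hudef⟩ : ∃ u, u = Real.sqrt t := ⟨_, rfl⟩
  have ht0 : 0 ≤ t := by rw [htdef]; linarith
  have ht14 : t ≤ 1/4 := by rw [htdef]; linarith
  have hu0 : 0 ≤ u := hudef ▸ Real.sqrt_nonneg t
  have hu2 : u^2 = t := hudef ▸ Real.sq_sqrt ht0
  have hu12 : u ≤ 1/2 := by nlinarith
  have hGa : (fun m => (-8*m^3+6*t*m+3*t-1)/27) (u/2) = f₂ Y := by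
    rw [f2_eq h1]; unfold F₂; rw [← htdef, ← hudef]
    simp only
    linear_combination (-(u/9)) * hu2
  have hGb : (fun m => (-8*m^3+6*t*m+3*t-1)/27) u = f₁ Y := by
    rw [f1_eq h1]; unfold F₁; rw [← htdef, ← hudef]
    simp only
    linear_combination (-(2*u/9)) * hu2
  have hcont : ContinuousOn (fun m => (-8*m^3+6*t*m+3*t-1)/27) (Set.Icc (u/2) u) :=
    Continuous.continuousOn (by fun_prop)
  have hXmem : X ∈ Set.Icc ((fun m => (-8*m^3+6*t*m+3*t-1)/27) u)
      ((fun m => (-8*m^3+6*t*m+3*t-1)/27) (u/2)) := by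
    rw [hGa, hGb]; exact ⟨h3, h4⟩
  obtain ⟨m, hm_mem, hGm⟩ := intermediate_value_Icc' (by linarith : u/2 ≤ u) hcont hXmem
  exact construct htdef hudef ht0 hm_mem.1 hm_mem.2
    (by nlinarith [sq_nonneg (2*m-1/2)]) (by linarith [hm_mem.2]) hGm

set_option maxHeartbeats 1000000 in
lemma revB {X Y : ℝ} (h1 : 3/8 ≤ Y) (h2 : Y ≤ 1/2) (h3 : f₁ Y ≤ X) (h4 : X ≤ 0) :
    (X,Y) ∈ phi '' DeltaTilde1 := by
  obtain ⟨t, htdef⟩ : ∃ t, t = 6*Y-2 := ⟨_, rfl⟩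
  obtain ⟨u, hudef⟩ : ∃ u, u = Real.sqrt t := ⟨_, rfl⟩
  have h1' : 1/3 ≤ Y := by linarith
  have ht14 : 1/4 ≤ t := by rw [htdef]; linarith
  have ht1 : t ≤ 1 := by rw [htdef]; linarith
  have ht0 : 0 ≤ t := by linarith
  have hu0 : 0 ≤ u := hudef ▸ Real.sqrt_nonneg t
  have hu2 : u^2 = t := hudef ▸ Real.sq_sqrt ht0
  have hu12 : 1/2 ≤ u := by nlinarith
  have hu1 : u ≤ 1 := by nlinarith
  obtain ⟨w, hwdef⟩ : ∃ w, w = Real.sqrt (12*t-3) := ⟨_, rfl⟩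
  have hw0 : 0 ≤ w := hwdef ▸ Real.sqrt_nonneg _
  have hw2 : w^2 = 12*t-3 := hwdef ▸ Real.sq_sqrt (by linarith)
  have hwu : w ≤ 4*u-1 := by nlinarith [sq_nonneg (u-1)]
  have hw2u : 2*u-1 ≤ w := by nlinarith
  have hGa : (fun m => (-8*m^3+6*t*m+3*t-1)/27) ((1+w)/4) = 0 := by
    simp only
    linear_combination (-(w+3)/216) * hw2
  have hGb : (fun m => (-8*m^3+6*t*m+3*t-1)/27) u = f₁ Y := by
    rw [f1_eq h1']; unfold F₁; rw [← htdef, ← hudef]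
    simp only
    linear_combination (-(2*u/9)) * hu2
  have hcont : ContinuousOn (fun m => (-8*m^3+6*t*m+3*t-1)/27) (Set.Icc ((1+w)/4) u) :=
    Continuous.continuousOn (by fun_prop)
  have hXmem : X ∈ Set.Icc ((fun m => (-8*m^3+6*t*m+3*t-1)/27) u)
      ((fun m => (-8*m^3+6*t*m+3*t-1)/27) ((1+w)/4)) := by
    rw [hGa, hGb]; exact ⟨h3, h4⟩
  obtain ⟨m, hm_mem, hGm⟩ := intermediate_value_Icc' (by linarith : (1+w)/4 ≤ u) hcont hXmem
  have hmlb : (1+w)/4 ≤ m := hm_mem.1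
  have hmub : m ≤ u := hm_mem.2
  have hw4m : w ≤ 4*m-1 := by linarith
  have hq : 3*t ≤ 4*m^2-2*m+1 := by
    nlinarith [mul_le_mul hw4m hw4m hw0 (by linarith : (0:ℝ) ≤ 4*m-1)]
  exact construct htdef hudef ht0 (by linarith) hmub hq (by linarith) hGm

lemma image_eq : phi '' DeltaTilde1 =
    {p : ℝ × ℝ | 1 / 3 ≤ p.2 ∧ p.2 ≤ 3 / 8 ∧ f₁ p.2 ≤ p.1 ∧ p.1 ≤ f₂ p.2} ∪
    {p : ℝ × ℝ | 3 / 8 ≤ p.2 ∧ p.2 ≤ 1 / 2 ∧ f₁ p.2 ≤ p.1 ∧ p.1 ≤ 0} := by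
  apply Set.Subset.antisymm
  · rintro p ⟨⟨c,d⟩, hmem, rfl⟩
    exact forward hmem
  · rintro ⟨X,Y⟩ (⟨h1,h2,h3,h4⟩|⟨h1,h2,h3,h4⟩)
    · exact revA h1 h2 h3 h4
    · exact revB h1 h2 h3 h4

lemma mono1 {a b : ℝ} (ha : 1/3 ≤ a) (hab : a ≤ b) (hb : b ≤ 1/2) : f₁ a ≤ f₁ b := by
  rw [f1_eq ha, f1_eq (le_trans ha hab)]
  obtain ⟨p, hpdef⟩ : ∃ p, p = Real.sqrt (6*a-2) := ⟨_, rfl⟩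
  obtain ⟨q, hqdef⟩ : ∃ q, q = Real.sqrt (6*b-2) := ⟨_, rfl⟩
  have hp0 : 0 ≤ p := hpdef ▸ Real.sqrt_nonneg _
  have hq0 : 0 ≤ q := hqdef ▸ Real.sqrt_nonneg _
  have hp2 : p^2 = 6*a-2 := hpdef ▸ Real.sq_sqrt (by linarith)
  have hq2 : q^2 = 6*b-2 := hqdef ▸ Real.sq_sqrt (by linarith)
  have hpq : p ≤ q := by
    rw [hpdef, hqdef]; exact Real.sqrt_le_sqrt (by linarith)
  have hq1 : q ≤ 1 := by nlinarith
  have hp1 : p ≤ 1 := le_trans hpq hq1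
  unfold F₁
  rw [← hpdef, ← hqdef]
  have hD : 0 ≤ 3*(q+p) - 2*(q^2+q*p+p^2) := by
    nlinarith [mul_nonneg hp0 (by linarith : 0 ≤ 1-p), mul_nonneg hq0 (by linarith : 0 ≤ 1-q),
      sq_nonneg (p-q)]
  nlinarith [mul_nonneg (by linarith : 0 ≤ q-p) hD]

lemma mono2 {a b : ℝ} (ha : 1/3 ≤ a) (hab : a ≤ b) : f₂ a ≤ f₂ b := by
  rw [f2_eq ha, f2_eq (le_trans ha hab)]
  have hpq : Real.sqrt (6*a-2) ≤ Real.sqrt (6*b-2) := Real.sqrt_le_sqrt (by linarith)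
  have hp0 : 0 ≤ Real.sqrt (6*a-2) := Real.sqrt_nonneg _
  unfold F₂
  have := pow_le_pow_left₀ hp0 hpq 3
  nlinarith [this]

lemma interval_lemma {S : Set ℝ} (hne : S.Nonempty) (hc : IsCompact S) (ho : S.OrdConnected) :
    ∃ a b, S = Set.Icc a b := by
  refine ⟨sInf S, sSup S, Set.Subset.antisymm ?_ ?_⟩
  · exact fun x hx => ⟨csInf_le hc.bddBelow hx, le_csSup hc.bddAbove hx⟩
  · exact ho.out (hc.sInf_mem hne) (hc.sSup_mem hne)

lemma contF1 : Continuous F₁ := by unfold F₁; fun_prop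

lemma contF2 : Continuous F₂ := by unfold F₂; fun_prop

set_option maxHeartbeats 1000000 in
/-- Explicit description of the region `S = φ(Δ̃₁)`; in particular its
intersection with any horizontal or vertical line is empty or a closed
interval. -/
theorem image_phi_eq :
    phi '' DeltaTilde1 =
      {p : ℝ × ℝ | 1 / 3 ≤ p.2 ∧ p.2 ≤ 3 / 8 ∧ f₁ p.2 ≤ p.1 ∧ p.1 ≤ f₂ p.2} ∪
      {p : ℝ × ℝ | 3 / 8 ≤ p.2 ∧ p.2 ≤ 1 / 2 ∧ f₁ p.2 ≤ p.1 ∧ p.1 ≤ 0} ∧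
    (∀ y : ℝ, {x : ℝ | (x, y) ∈ phi '' DeltaTilde1} = ∅ ∨
      ∃ a b : ℝ, {x : ℝ | (x, y) ∈ phi '' DeltaTilde1} = Set.Icc a b) ∧
    (∀ x : ℝ, {y : ℝ | (x, y) ∈ phi '' DeltaTilde1} = ∅ ∨
      ∃ a b : ℝ, {y : ℝ | (x, y) ∈ phi '' DeltaTilde1} = Set.Icc a b) := by
  refine ⟨image_eq, ?_, ?_⟩
  · intro y
    by_cases hlo : 1/3 ≤ y
    · by_cases h38 : y ≤ 3/8
      · right; refine ⟨f₁ y, f₂ y, ?_⟩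
        ext x
        simp only [image_eq, Set.mem_union, Set.mem_setOf_eq, Set.mem_Icc]
        constructor
        · rintro (⟨_,_,ha,hb⟩|⟨h1,_,ha,hb⟩)
          · exact ⟨ha, hb⟩
          · have hy : y = 3/8 := le_antisymm h38 h1
            subst hy
            exact ⟨ha, by rw [f2_38]; exact hb⟩
        · rintro ⟨ha, hb⟩
          exact Or.inl ⟨hlo, h38, ha, hb⟩
      · by_cases hhi : y ≤ 1/2
        · right; refine ⟨f₁ y, 0, ?_⟩
          ext x
          simp only [image_eq, Set.mem_union, Set.mem_setOf_eq, Set.mem_Icc]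
          constructor
          · rintro (⟨_,h2,_,_⟩|⟨_,_,ha,hb⟩)
            · exact absurd h2 h38
            · exact ⟨ha, hb⟩
          · rintro ⟨ha, hb⟩
            exact Or.inr ⟨by linarith, hhi, ha, hb⟩
        · left
          ext x
          simp only [image_eq, Set.mem_union, Set.mem_setOf_eq, Set.mem_empty_iff_false,
            iff_false, not_or]
          constructor
          · rintro ⟨_,h2,_,_⟩; exact h38 h2
          · rintro ⟨_,h2,_,_⟩; exact hhi h2
    · left
      ext x
      simp only [image_eq, Set.mem_union, Set.mem_setOf_eq, Set.mem_empty_iff_false,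
        iff_false, not_or]
      constructor
      · rintro ⟨h1,_,_,_⟩; exact hlo h1
      · rintro ⟨h1,_,_,_⟩; exact hlo (by linarith)
  · intro x
    have hset : {y : ℝ | (x,y) ∈ phi '' DeltaTilde1} =
        {y : ℝ | 1/3 ≤ y ∧ y ≤ 3/8 ∧ F₁ y ≤ x ∧ x ≤ F₂ y} ∪
        {y : ℝ | 3/8 ≤ y ∧ y ≤ 1/2 ∧ F₁ y ≤ x ∧ x ≤ 0} := by
      ext y
      simp only [image_eq, Set.mem_union, Set.mem_setOf_eq]
      constructor
      · rintro (⟨h1,h2,h3,h4⟩|⟨h1,h2,h3,h4⟩)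
        · exact Or.inl ⟨h1, h2, by rw [← f1_eq h1]; exact h3, by rw [← f2_eq h1]; exact h4⟩
        · have h1' : 1/3 ≤ y := by linarith
          exact Or.inr ⟨h1, h2, by rw [← f1_eq h1']; exact h3, h4⟩
      · rintro (⟨h1,h2,h3,h4⟩|⟨h1,h2,h3,h4⟩)
        · exact Or.inl ⟨h1, h2, by rw [f1_eq h1]; exact h3, by rw [f2_eq h1]; exact h4⟩
        · have h1' : 1/3 ≤ y := by linarith
          exact Or.inr ⟨h1, h2, by rw [f1_eq h1']; exact h3, h4⟩
    rw [hset]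
    rcases Set.eq_empty_or_nonempty ({y : ℝ | 1/3 ≤ y ∧ y ≤ 3/8 ∧ F₁ y ≤ x ∧ x ≤ F₂ y} ∪
        {y : ℝ | 3/8 ≤ y ∧ y ≤ 1/2 ∧ F₁ y ≤ x ∧ x ≤ 0}) with he | hne
    · left; exact he
    · right
      apply interval_lemma hne
      · apply IsCompact.union
        · refine (isCompact_Icc (a:=(1/3:ℝ)) (b:=3/8)).of_isClosed_subset ?_ ?_
          · have hrw : {y : ℝ | 1/3 ≤ y ∧ y ≤ 3/8 ∧ F₁ y ≤ x ∧ x ≤ F₂ y} =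
                Set.Icc (1/3) (3/8) ∩ (F₁ ⁻¹' Set.Iic x) ∩ (F₂ ⁻¹' Set.Ici x) := by
              ext y
              simp only [Set.mem_setOf_eq, Set.mem_inter_iff, Set.mem_Icc, Set.mem_preimage,
                Set.mem_Iic, Set.mem_Ici]
              tauto
            rw [hrw]
            exact ((isClosed_Icc.inter (isClosed_Iic.preimage contF1)).inter
              (isClosed_Ici.preimage contF2))
          · rintro y ⟨h1,h2,_⟩; exact ⟨h1,h2⟩
        · refine (isCompact_Icc (a:=(3/8:ℝ)) (b:=1/2)).of_isClosed_subset ?_ ?_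
          · have hrw : {y : ℝ | 3/8 ≤ y ∧ y ≤ 1/2 ∧ F₁ y ≤ x ∧ x ≤ 0} =
                Set.Icc (3/8) (1/2) ∩ (F₁ ⁻¹' Set.Iic x) ∩ {_y : ℝ | x ≤ 0} := by
              ext y
              simp only [Set.mem_setOf_eq, Set.mem_inter_iff, Set.mem_Icc, Set.mem_preimage,
                Set.mem_Iic]
              tauto
            rw [hrw]
            refine (isClosed_Icc.inter (isClosed_Iic.preimage contF1)).inter ?_
            by_cases hx : x ≤ 0
            · simp [hx]
            · simp [hx]
          · rintro y ⟨h1,h2,_⟩; exact ⟨h1,h2⟩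
      · constructor
        rintro y1 hy1 y2 hy2 y ⟨hya, hyb⟩
        simp only [Set.mem_union, Set.mem_setOf_eq] at hy1 hy2 ⊢
        have hy2le : y2 ≤ 1/2 := by
          rcases hy2 with h|h
          · linarith [h.2.1]
          · exact h.2.1
        have hy1ge : 1/3 ≤ y1 := by
          rcases hy1 with h|h
          · exact h.1
          · linarith [h.1]
        have hF1y2 : F₁ y2 ≤ x := by rcases hy2 with h|h <;> exact h.2.2.1
        have hyge : 1/3 ≤ y := le_trans hy1ge hya
        have hyle : y ≤ 1/2 := le_trans hyb hy2le
        have hy2ge : 1/3 ≤ y2 := le_trans hyge hyb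
        have hf1 : F₁ y ≤ x := by
          have hm := mono1 hyge hyb hy2le
          rw [f1_eq hyge, f1_eq hy2ge] at hm
          linarith
        by_cases h38 : y ≤ 3/8
        · rcases hy1 with h|h
          · left
            refine ⟨hyge, h38, hf1, ?_⟩
            have hm := mono2 h.1 hya
            rw [f2_eq h.1, f2_eq hyge] at hm
            linarith [h.2.2.2]
          · right
            exact ⟨by linarith [h.1], hyle, hf1, h.2.2.2⟩
        · rcases hy2 with h|h
          · exact absurd (by linarith [h.2.1] : y ≤ 3/8) h38
          · right
            exact ⟨by linarith, hyle, hf1, h.2.2.2⟩
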